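/- Let N be a finite-index normal subgroup of B₃ contained in PB₃, and let (m,f) ∈ ℤ × F₂ satisfy the hexagon relations modulo N: σ₁^{2m+1} f⁻¹σ₂^{2m+1}f N = f⁻¹σ₁σ₂x₁₂^{-m}c^m N and f⁻¹σ₂^{2m+1}f σ₁^{2m+1} N = σ₂σ₁x₂₃^{-m}c^m f N. Then the assignments σ₁ ↦ σ₁^{2m+1}N, σ₂ ↦ f⁻¹σ₂^{2m+1}f N define a group homomorphism T_{m,f} : B₃ → B₃/N. -/

import Mathlib

def braidRel : Set (FreeGroup (Fin 2)) :=
  {FreeGroup.of 0 * FreeGroup.of 1 * FreeGroup.of 0 *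
    (FreeGroup.of 1 * FreeGroup.of 0 * FreeGroup.of 1)⁻¹}

/-- The Artin braid group on 3 strands. -/
abbrev B3 := PresentedGroup braidRel

def σ₁ : B3 := PresentedGroup.of 0
def σ₂ : B3 := PresentedGroup.of 1

/-- The standard projection B₃ → S₃. -/
def ρ : B3 →* Equiv.Perm (Fin 3) :=
  PresentedGroup.toGroup (f := ![Equiv.swap 0 1, Equiv.swap 1 2]) (by
    intro r hr
    simp only [braidRel, Set.mem_singleton_iff] at hr
    subst hr
    simp only [map_mul, map_inv, FreeGroup.lift_apply_of]
    decide)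

/-- The pure braid group on 3 strands. -/
def PB3 : Subgroup B3 := ρ.ker

def c : B3 := (σ₁ * σ₂ * σ₁) ^ 2

abbrev F2 := FreeGroup (Fin 2)
def xx : F2 := FreeGroup.of 0
def yy : F2 := FreeGroup.of 1

/-- The identification of F₂ with ⟨σ₁², σ₂²⟩ ≤ PB₃. -/
def ι : F2 →* B3 := FreeGroup.lift ![σ₁ ^ 2, σ₂ ^ 2]

/-- The pair (m, f) satisfies the two hexagon relations modulo N. -/
def Hex (N : Subgroup B3) [N.Normal] (m : ℤ) (f : F2) : Prop :=
  QuotientGroup.mk' N (σ₁ ^ (2 * m + 1) * (ι f)⁻¹ * σ₂ ^ (2 * m + 1) * ι f) =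
      QuotientGroup.mk' N ((ι f)⁻¹ * σ₁ * σ₂ * (σ₁ ^ 2) ^ (-m) * c ^ m) ∧
  QuotientGroup.mk' N ((ι f)⁻¹ * σ₂ ^ (2 * m + 1) * ι f * σ₁ ^ (2 * m + 1)) =
      QuotientGroup.mk' N (σ₂ * σ₁ * (σ₂ ^ 2) ^ (-m) * c ^ m * ι f)

/-- N_ord: the lcm of the orders of x₁₂N, x₂₃N and cN in B₃/N. -/
noncomputable def Nord (N : Subgroup B3) [N.Normal] : ℕ :=
  Nat.lcm
    (Nat.lcm (orderOf (QuotientGroup.mk' N (σ₁ ^ 2)))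
      (orderOf (QuotientGroup.mk' N (σ₂ ^ 2))))
    (orderOf (QuotientGroup.mk' N c))

/-- The endomorphism E_{m,f} of F₂. -/
def Emap (m : ℤ) (f : F2) : F2 →* F2 :=
  FreeGroup.lift ![xx ^ (2 * m + 1), f⁻¹ * yy ^ (2 * m + 1) * f]

/-- [m, f] is a GT-shadow with target N and kernel (source) K. -/
def IsShadow (K N : Subgroup B3) [N.Normal] (m : ℤ) (f : F2) : Prop :=
  Hex N m f ∧
  (∃ g ∈ commutator F2, g⁻¹ * f ∈ N.comap ι) ∧
  IsUnit ((2 * m + 1 : ℤ) : ZMod (Nord N)) ∧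
  ∃ T : B3 →* B3 ⧸ N,
    T σ₁ = QuotientGroup.mk' N (σ₁ ^ (2 * m + 1)) ∧
    T σ₂ = QuotientGroup.mk' N ((ι f)⁻¹ * σ₂ ^ (2 * m + 1) * ι f) ∧
    Function.Surjective T ∧
    T.ker = K

/-- [m, f] is a GT-shadow with target N (with unspecified source). -/
def IsShadowTgt (N : Subgroup B3) [N.Normal] (m : ℤ) (f : F2) : Prop :=
  ∃ K : Subgroup B3, IsShadow K N m f

/-!
The map σ₁ ↦ a, σ₂ ↦ b extends to B₃ exactly when a b a = b a b. For a = σ₁^{2m+1} and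
b = f⁻¹σ₂^{2m+1}f the first hexagon relation reads a b = f⁻¹ w with w = σ₁σ₂x₁₂^{-m}c^m, and
w conjugates σ₁^{2m+1} to σ₂^{2m+1} (Δ = σ₁σ₂σ₁ conjugates σ₁ to σ₂ and c = Δ² is central),
so a b a = f⁻¹ w a = f⁻¹ σ₂^{2m+1} w = b (a b).
-/

theorem braid_of_mul_conj_eq {G : Type*} [Group G] {a b w g : G}
    (hab : a * (g⁻¹ * b * g) = g⁻¹ * w) (hw : SemiconjBy w a b) :
    a * (g⁻¹ * b * g) * a = g⁻¹ * b * g * a * (g⁻¹ * b * g) :=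
  calc a * (g⁻¹ * b * g) * a = g⁻¹ * (w * a) := by rw [hab, mul_assoc]
    _ = g⁻¹ * (b * w) := by rw [hw.eq]
    _ = g⁻¹ * b * g * (a * (g⁻¹ * b * g)) := by rw [hab]; group
    _ = g⁻¹ * b * g * a * (g⁻¹ * b * g) := by rw [← mul_assoc]

namespace B3

theorem σ₁_mul_σ₂_mul_σ₁ : σ₁ * σ₂ * σ₁ = σ₂ * σ₁ * σ₂ := by
  have h : PresentedGroup.mk braidRel (FreeGroup.of 0 * FreeGroup.of 1 * FreeGroup.of 0 *
      (FreeGroup.of 1 * FreeGroup.of 0 * FreeGroup.of 1)⁻¹) = 1 :=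
    (QuotientGroup.eq_one_iff _).mpr (Subgroup.subset_normalClosure rfl)
  rwa [map_mul, map_inv, mul_inv_eq_one] at h

def Δ : B3 := σ₁ * σ₂ * σ₁

theorem semiconjBy_Δ_σ₁ : SemiconjBy Δ σ₁ σ₂ := by
  unfold SemiconjBy Δ
  conv_lhs => rw [σ₁_mul_σ₂_mul_σ₁]
  group

theorem semiconjBy_Δ_σ₂ : SemiconjBy Δ σ₂ σ₁ := by
  unfold SemiconjBy Δ
  conv_rhs => rw [σ₁_mul_σ₂_mul_σ₁]
  group

theorem c_eq_Δ_sq : c = Δ ^ 2 := rfl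

theorem commute_c_σ₁ : Commute c σ₁ := by
  rw [c_eq_Δ_sq, sq]
  exact semiconjBy_Δ_σ₂.mul_left semiconjBy_Δ_σ₁

theorem semiconjBy_hexagonWord (m : ℤ) :
    SemiconjBy (σ₁ * σ₂ * (σ₁ ^ 2) ^ (-m) * c ^ m) (σ₁ ^ (2 * m + 1)) (σ₂ ^ (2 * m + 1)) := by
  have hΔ : Δ * σ₁ ^ (2 * m) = σ₂ ^ (2 * m) * Δ := (semiconjBy_Δ_σ₁.zpow_right (2 * m)).eq
  have hc : c ^ m * σ₁ ^ (2 * m + 1) = σ₁ ^ (2 * m + 1) * c ^ m :=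
    (commute_c_σ₁.zpow_zpow m (2 * m + 1)).eq
  unfold Δ at hΔ
  calc σ₁ * σ₂ * (σ₁ ^ 2) ^ (-m) * c ^ m * σ₁ ^ (2 * m + 1)
      = σ₁ * σ₂ * (σ₁ ^ 2) ^ (-m) * σ₁ ^ (2 * m + 1) * c ^ m := by
        rw [mul_assoc _ (c ^ m), hc]; group
    _ = σ₁ * σ₂ * σ₁ * c ^ m := by group
    _ = σ₂ ^ (2 * m) * (σ₂ * σ₁ * σ₂) * (σ₁ ^ (2 * m))⁻¹ * c ^ m := by
      rw [← σ₁_mul_σ₂_mul_σ₁, ← hΔ]; group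
    _ = σ₂ ^ (2 * m + 1) * (σ₁ * σ₂ * (σ₁ ^ 2) ^ (-m) * c ^ m) := by group

variable {G : Type*} [Group G]

def lift (a b : G) (h : a * b * a = b * a * b) : B3 →* G :=
  PresentedGroup.toGroup (f := ![a, b]) <| by
    rintro r rfl
    simpa only [map_mul, map_inv, FreeGroup.lift_apply_of, Matrix.cons_val_zero,
      Matrix.cons_val_one, mul_inv_eq_one] using h

theorem lift_σ₁ (a b : G) (h : a * b * a = b * a * b) : lift a b h σ₁ = a :=
  PresentedGroup.toGroup.of _

theorem lift_σ₂ (a b : G) (h : a * b * a = b * a * b) : lift a b h σ₂ = b :=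
  PresentedGroup.toGroup.of _

end B3

theorem exists_Tmf_general (N : Subgroup B3) [N.Normal] (m : ℤ) (f : F2) (hhex : Hex N m f) :
    ∃ T : B3 →* B3 ⧸ N,
      T σ₁ = QuotientGroup.mk' N (σ₁ ^ (2 * m + 1)) ∧
      T σ₂ = QuotientGroup.mk' N ((ι f)⁻¹ * σ₂ ^ (2 * m + 1) * ι f) := by
  set π := QuotientGroup.mk' N
  have hconj : π ((ι f)⁻¹ * σ₂ ^ (2 * m + 1) * ι f) =
      (π (ι f))⁻¹ * π (σ₂ ^ (2 * m + 1)) * π (ι f) := by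
    simp only [map_mul, map_inv]
  have hab : π (σ₁ ^ (2 * m + 1)) * ((π (ι f))⁻¹ * π (σ₂ ^ (2 * m + 1)) * π (ι f)) =
      (π (ι f))⁻¹ * π (σ₁ * σ₂ * (σ₁ ^ 2) ^ (-m) * c ^ m) := by
    simpa only [map_mul, map_inv, mul_assoc] using hhex.1
  have hbraid := braid_of_mul_conj_eq hab ((B3.semiconjBy_hexagonWord m).map π)
  rw [← hconj] at hbraid
  exact ⟨B3.lift _ _ hbraid, B3.lift_σ₁ .., B3.lift_σ₂ ..⟩

/-- If (m,f) satisfies the hexagon relations modulo N, then σ₁ ↦ σ₁^{2m+1}N,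
σ₂ ↦ f⁻¹σ₂^{2m+1}f N defines a group homomorphism T_{m,f} : B₃ → B₃/N. -/
theorem exists_Tmf (N : Subgroup B3) [N.Normal] (hfin : N.FiniteIndex)
    (hle : N ≤ PB3) (m : ℤ) (f : F2) (hhex : Hex N m f) :
    ∃ T : B3 →* B3 ⧸ N,
      T σ₁ = QuotientGroup.mk' N (σ₁ ^ (2 * m + 1)) ∧
      T σ₂ = QuotientGroup.mk' N ((ι f)⁻¹ * σ₂ ^ (2 * m + 1) * ι f) :=
  exists_Tmf_general N m f hhex
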